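/- Let X and Y be infinite pseudocompact Tychonoff spaces such that the product X×Y is pseudocompact. Then there is no continuous linear surjection from C_p(X×Y) onto C_p(X, C_p(Y)); in particular, C_p(X×Y) is not isomorphic to C_p(X, C_p(Y)). -/

import Mathlib

open Filter Topology

set_option linter.unusedVariables false

/-- `C_p(X, E)`: the submodule of `X → E` (with the product, i.e. pointwise, topology)
consisting of all continuous functions from `X` to `E`.  The coerced type `↥(Cp X E)` carries
the subspace topology, i.e. the topology of pointwise convergence. -/
def Cp (X E : Type*) [TopologicalSpace X] [TopologicalSpace E]
    [AddCommGroup E] [Module ℝ E] [ContinuousAdd E] [ContinuousSMul ℝ E] :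
    Submodule ℝ (X → E) where
  carrier := {f | Continuous f}
  add_mem' hf hg := hf.add hg
  zero_mem' := continuous_const
  smul_mem' c f hf := hf.const_smul c

/-- `(c₀)_p`: the space of real sequences converging to `0`, as a submodule of `ℕ → ℝ`;
the coerced type carries the topology of pointwise convergence inherited from `ℝ^ℕ`. -/
def c0p : Submodule ℝ (ℕ → ℝ) where
  carrier := {x | Tendsto x atTop (𝓝 0)}
  add_mem' hx hy := by
    have h := Filter.Tendsto.add hx hy
    rw [zero_add] at h
    exact h
  zero_mem' := tendsto_const_nhds
  smul_mem' c x hx := by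
    have h := Filter.Tendsto.const_smul hx c
    rw [smul_zero] at h
    exact h

/-- A topological vector space `E` contains a complemented copy of `F`: there is a closed
linear subspace `E₁` of `E` which is linearly homeomorphic to `F` and a continuous linear
projection from `E` onto `E₁`. -/
def HasComplementedCopy (E : Type*) [TopologicalSpace E] [AddCommGroup E] [Module ℝ E]
    (F : Type*) [TopologicalSpace F] [AddCommGroup F] [Module ℝ F] : Prop :=
  ∃ E₁ : Submodule ℝ E, IsClosed (E₁ : Set E) ∧ Nonempty (E₁ ≃L[ℝ] F) ∧
    ∃ P : E →L[ℝ] E, Set.range P = (E₁ : Set E) ∧ ∀ x ∈ E₁, P x = x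

/-- A function `f : X × Y → ℝ` is separately continuous. -/
def SepCont {X Y : Type*} [TopologicalSpace X] [TopologicalSpace Y] (f : X × Y → ℝ) : Prop :=
  (∀ x, Continuous fun y => f (x, y)) ∧ (∀ y, Continuous fun x => f (x, y))

/-- `SC_p(X × Y)`: the submodule of `X × Y → ℝ` consisting of all separately continuous
functions; the coerced type carries the topology of pointwise convergence. -/
def SCp (X Y : Type*) [TopologicalSpace X] [TopologicalSpace Y] : Submodule ℝ (X × Y → ℝ) where
  carrier := {f | SepCont f}
  add_mem' hf hg := ⟨fun x => (hf.1 x).add (hg.1 x), fun y => (hf.2 y).add (hg.2 y)⟩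
  zero_mem' := ⟨fun _ => continuous_const, fun _ => continuous_const⟩
  smul_mem' c f hf := ⟨fun x => (hf.1 x).const_smul c, fun y => (hf.2 y).const_smul c⟩

/-- The topology `σ` on `X × Y`: the coarsest topology making every separately continuous
real-valued function on `X × Y` continuous. -/
def sigmaTop (X Y : Type*) [TopologicalSpace X] [TopologicalSpace Y] :
    TopologicalSpace (X × Y) :=
  ⨅ f : {f : X × Y → ℝ // SepCont f}, TopologicalSpace.induced f.1 inferInstance

/-- The action of a finite linear combination `μ = Σ_z μ(z)·δ_z` of Dirac functionals
on a function `f`. -/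
noncomputable def finComboApply {Z : Type*} (μ : Z →₀ ℝ) (f : Z → ℝ) : ℝ :=
  μ.sum fun z a => a * f z

/-- `μ` is a JN-sequence on the topological space `Z`: each `μ n` is a finite linear
combination of Dirac functionals of norm `Σ_z |μ n z| = 1`, and `μ n (f) → 0` for every
continuous `f : Z → ℝ`. -/
def IsJNSeq (Z : Type*) [TopologicalSpace Z] (μ : ℕ → Z →₀ ℝ) : Prop :=
  (∀ n, ((μ n).sum fun _ a => |a|) = 1) ∧
    ∀ f : Z → ℝ, Continuous f → Tendsto (fun n => finComboApply (μ n) f) atTop (𝓝 0)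

/-- `Z` admits a JN-sequence. -/
def HasJNSeq (Z : Type*) [TopologicalSpace Z] : Prop := ∃ μ, IsJNSeq Z μ

/-- A space is pseudocompact if every continuous real-valued function on it is bounded. -/
def Pseudocompact (Z : Type*) [TopologicalSpace Z] : Prop :=
  ∀ f : Z → ℝ, Continuous f → Bornology.IsBounded (Set.range f)

/-- The action of a finite linear combination `Σ_{(x,y)} ν(x,y)·(δ_x ⊗ δ_y)` of tensor
products of Dirac functionals on an element of `C_p(X, C_p(Y))`. -/
noncomputable def tensorApply {X Y : Type*} [TopologicalSpace X] [TopologicalSpace Y]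
    (ν : (X × Y) →₀ ℝ) (f : ↥(Cp X ↥(Cp Y ℝ))) : ℝ :=
  ν.sum fun p a => a * (f.1 p.1).1 p.2

/-!
For infinite Tychonoff `X` and `Y` pick continuous bumps `uₖ` on `X` and `vₖ` on `Y` with pairwise
disjoint supports and `uₖ xₖ = vₖ yₖ = 1`. For every real sequence `c` the function
`(x, y) ↦ Σ cₖ uₖ(x) vₖ(y)` is separately continuous, since for fixed `x` (or fixed `y`) at most
one term is nonzero, and it takes the value `cₖ` at `(xₖ, yₖ)`. Hence evaluation at the points
`(xₖ, yₖ)` maps `C_p(X, C_p(Y))` continuously and linearly onto `ℝ^ℕ`.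

For pseudocompact `Z` no continuous linear map `Φ` sends `C_p(Z)` onto `ℝ^ℕ`: the sets
`{f : sup |f| ≤ n}` are bounded in `C_p(Z)`, so the `n`-th coordinate of `Φ` is bounded on the
`n`-th of them, by `Cₙ` say, and as every `f` lies in one of these sets, `(Cₙ + 1)ₙ` is not in the
range of `Φ`. Apply this to `Z = X × Y`.
-/

open Function

lemma CompletelyRegularSpace.exists_continuous_eq_one_support_subset {X : Type*}
    [TopologicalSpace X] [CompletelyRegularSpace X] {U : Set X} {x : X} (hU : IsOpen U)
    (hx : x ∈ U) : ∃ u : X → ℝ, Continuous u ∧ u x = 1 ∧ support u ⊆ U := by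
  obtain ⟨f, hf, hfx, hfU⟩ := CompletelyRegularSpace.completely_regular_isOpen x U hU hx
  refine ⟨fun z => 1 - f z, by fun_prop, by simp [hfx], fun z hz => ?_⟩
  by_contra hzU
  exact hz (by simp [hfU hzU])

lemma exists_seq_continuous_pairwise_disjoint_support (X : Type*) [TopologicalSpace X]
    [T35Space X] [Infinite X] :
    ∃ (u : ℕ → X → ℝ) (x : ℕ → X), (∀ k, Continuous (u k)) ∧ (∀ k, u k (x k) = 1) ∧
      Pairwise (Disjoint on fun k => support (u k)) := by
  obtain ⟨U, hUinf, hUo, hUd⟩ := exists_seq_infinite_isOpen_pairwise_disjoint X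
  choose x hx using fun k => (hUinf k).nonempty
  choose u hu hux huU using fun k =>
    CompletelyRegularSpace.exists_continuous_eq_one_support_subset (hUo k) (hx k)
  exact ⟨u, x, hu, hux, fun j k hjk => (hUd hjk).mono (huU j) (huU k)⟩

lemma Pairwise.exists_forall_ne_eq_zero {ι α M : Type*} [Nonempty ι] [Zero M]
    {u : ι → α → M} (h : Pairwise (Disjoint on fun k => support (u k))) (a : α) :
    ∃ k, ∀ j ≠ k, u j a = 0 := by
  by_cases ha : ∃ k, u k a ≠ 0
  · obtain ⟨k, hk⟩ := ha
    exact ⟨k, fun j hjk => by_contra fun hj => (h hjk).ne_of_mem hj hk rfl⟩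
  · simp only [not_exists, not_not] at ha
    exact ⟨Classical.arbitrary ι, fun j _ => ha j⟩

section DiagonalSum

variable {X Y : Type*} {u : ℕ → X → ℝ} {v : ℕ → Y → ℝ}

noncomputable def diagonalSum (u : ℕ → X → ℝ) (v : ℕ → Y → ℝ) (c : ℕ → ℝ) (x : X) (y : Y) : ℝ :=
  ∑' k, c k * (u k x * v k y)

lemma diagonalSum_eq_of_forall_ne {k : ℕ} {x : X} {y : Y} (h : ∀ j ≠ k, u j x * v j y = 0)
    (c : ℕ → ℝ) : diagonalSum u v c x y = c k * (u k x * v k y) :=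
  tsum_eq_single k fun j hj => by rw [h j hj, mul_zero]

lemma continuous_diagonalSum_left [TopologicalSpace Y] (hv : ∀ k, Continuous (v k))
    (hud : Pairwise (Disjoint on fun k => support (u k))) (c : ℕ → ℝ) (x : X) :
    Continuous (diagonalSum u v c x) := by
  obtain ⟨k, hk⟩ := hud.exists_forall_ne_eq_zero x
  have hsum : diagonalSum u v c x = fun y => c k * (u k x * v k y) :=
    funext fun y => diagonalSum_eq_of_forall_ne (fun j hj => by rw [hk j hj, zero_mul]) c
  rw [hsum]
  fun_prop

lemma continuous_diagonalSum_right [TopologicalSpace X] (hu : ∀ k, Continuous (u k))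
    (hvd : Pairwise (Disjoint on fun k => support (v k))) (c : ℕ → ℝ) (y : Y) :
    Continuous fun x => diagonalSum u v c x y := by
  obtain ⟨k, hk⟩ := hvd.exists_forall_ne_eq_zero y
  have hsum : (fun x => diagonalSum u v c x y) = fun x => c k * (u k x * v k y) :=
    funext fun x => diagonalSum_eq_of_forall_ne (fun j hj => by rw [hk j hj, mul_zero]) c
  rw [hsum]
  fun_prop

end DiagonalSum

namespace Cp

def ofSeparatelyContinuous {X Y : Type*} [TopologicalSpace X] [TopologicalSpace Y]
    (g : X → Y → ℝ) (hy : ∀ x, Continuous (g x)) (hx : ∀ y, Continuous fun x => g x y) :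
    Cp X (Cp Y ℝ) :=
  ⟨fun x => ⟨g x, hy x⟩, continuous_induced_rng.2 (continuous_pi hx)⟩

def evalCLM {X : Type*} [TopologicalSpace X] (E : Type*) [TopologicalSpace E] [AddCommGroup E]
    [Module ℝ E] [ContinuousAdd E] [ContinuousSMul ℝ E] (x : X) : Cp X E →L[ℝ] E :=
  (ContinuousLinearMap.proj x).comp (Cp X E).subtypeL

theorem exists_surjective_continuousLinearMap_pi_nat (X Y : Type*) [TopologicalSpace X]
    [T35Space X] [Infinite X] [TopologicalSpace Y] [T35Space Y] [Infinite Y] :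
    ∃ Φ : Cp X (Cp Y ℝ) →L[ℝ] (ℕ → ℝ), Surjective Φ := by
  obtain ⟨u, x, hu, hux, hud⟩ := exists_seq_continuous_pairwise_disjoint_support X
  obtain ⟨v, y, hv, hvy, hvd⟩ := exists_seq_continuous_pairwise_disjoint_support Y
  refine ⟨ContinuousLinearMap.pi fun k => (evalCLM ℝ (y k)).comp (evalCLM _ (x k)),
    fun c => ⟨ofSeparatelyContinuous (diagonalSum u v c) (continuous_diagonalSum_left hv hud c)
      (continuous_diagonalSum_right hu hvd c), funext fun k => ?_⟩⟩
  have hux_ne : ∀ j ≠ k, u j (x k) = 0 := fun j hj =>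
    notMem_support.1 fun h => (hud hj).ne_of_mem h (by simp [hux k]) rfl
  have hval := diagonalSum_eq_of_forall_ne (u := u) (v := v) (x := x k) (y := y k)
    (fun j hj => by rw [hux_ne j hj, zero_mul]) c
  rwa [hux k, hvy k, one_mul, mul_one] at hval

end Cp

lemma Submodule.isVonNBounded_of_image_subtype {𝕜 E : Type*} [NormedDivisionRing 𝕜]
    [AddCommGroup E] [Module 𝕜 E] [TopologicalSpace E] {p : Submodule 𝕜 E} {S : Set p}
    (h : Bornology.IsVonNBounded 𝕜 (((↑) : p → E) '' S)) : Bornology.IsVonNBounded 𝕜 S := by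
  rw [Bornology.isVonNBounded_iff_tendsto_smallSets_nhds] at h ⊢
  rw [nhds_subtype_eq_comap, smallSets_comap_eq_comap_image, tendsto_comap_iff]
  convert h using 2 with c
  · exact image_smul_set p.subtype c S
  · rfl

lemma Cp.isVonNBounded_setOf_forall_norm_le (Z : Type*) [TopologicalSpace Z] {E : Type*}
    [NormedAddCommGroup E] [NormedSpace ℝ E] (M : ℝ) :
    Bornology.IsVonNBounded ℝ {f : Cp Z E | ∀ z, ‖f.1 z‖ ≤ M} := by
  refine Submodule.isVonNBounded_of_image_subtype (Bornology.isVonNBounded_pi_iff.2 fun z => ?_)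
  refine (NormedSpace.isVonNBounded_iff ℝ).2
    ((Metric.isBounded_closedBall (x := 0) (r := M)).subset ?_)
  rintro _ ⟨_, ⟨f, hf, rfl⟩, rfl⟩
  simpa using hf z

lemma Pseudocompact.exists_nat_norm_le {Z : Type*} [TopologicalSpace Z] (hZ : Pseudocompact Z)
    {f : Z → ℝ} (hf : Continuous f) : ∃ n : ℕ, ∀ z, ‖f z‖ ≤ n := by
  obtain ⟨C, hC⟩ := isBounded_iff_forall_norm_le.1 (hZ f hf)
  obtain ⟨n, hn⟩ := exists_nat_ge C
  exact ⟨n, fun z => (hC _ ⟨z, rfl⟩).trans hn⟩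

theorem Pseudocompact.not_surjective_continuousLinearMap_pi_nat {Z : Type*} [TopologicalSpace Z]
    (hZ : Pseudocompact Z) (Φ : Cp Z ℝ →L[ℝ] (ℕ → ℝ)) : ¬ Surjective Φ := by
  intro hΦ
  have hbound (n : ℕ) : ∃ C, ∀ f : Cp Z ℝ, (∀ z, ‖f.1 z‖ ≤ n) → ‖Φ f n‖ ≤ C := by
    have := (Cp.isVonNBounded_setOf_forall_norm_le Z (E := ℝ) n).image
      ((ContinuousLinearMap.proj n).comp Φ)
    obtain ⟨C, hC⟩ := isBounded_iff_forall_norm_le.1 ((NormedSpace.isVonNBounded_iff ℝ).1 this)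
    exact ⟨C, fun f hf => hC _ ⟨f, hf, rfl⟩⟩
  choose C hC using hbound
  obtain ⟨f, hf⟩ := hΦ fun n => C n + 1
  obtain ⟨n, hn⟩ := hZ.exists_nat_norm_le f.2
  have hle := hC n f hn
  rw [hf, Real.norm_eq_abs] at hle
  linarith [le_abs_self (C n + 1)]

theorem statement4_general (X Y : Type*) [TopologicalSpace X] [T35Space X] [Infinite X]
    [TopologicalSpace Y] [T35Space Y] [Infinite Y]
    (hXY : Pseudocompact (X × Y)) :
    (¬ ∃ T : ↥(Cp (X × Y) ℝ) →L[ℝ] ↥(Cp X ↥(Cp Y ℝ)), Function.Surjective T) ∧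
      ¬ Nonempty (↥(Cp (X × Y) ℝ) ≃L[ℝ] ↥(Cp X ↥(Cp Y ℝ))) := by
  have hno_surj : ¬ ∃ T : Cp (X × Y) ℝ →L[ℝ] Cp X (Cp Y ℝ), Surjective T := by
    rintro ⟨T, hT⟩
    obtain ⟨Φ, hΦ⟩ := Cp.exists_surjective_continuousLinearMap_pi_nat X Y
    exact hXY.not_surjective_continuousLinearMap_pi_nat (Φ.comp T) (hΦ.comp hT)
  exact ⟨hno_surj, fun ⟨e⟩ => hno_surj ⟨e, e.surjective⟩⟩

/-- Let `X` and `Y` be infinite pseudocompact Tychonoff spaces whose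
product is pseudocompact.  Then there is no continuous linear surjection from `C_p(X×Y)`
onto `C_p(X, C_p(Y))`; in particular the two spaces are not linearly homeomorphic. -/
theorem statement4 (X Y : Type*) [TopologicalSpace X] [T35Space X] [Infinite X]
    [TopologicalSpace Y] [T35Space Y] [Infinite Y]
    (hX : Pseudocompact X) (hY : Pseudocompact Y) (hXY : Pseudocompact (X × Y)) :
    (¬ ∃ T : ↥(Cp (X × Y) ℝ) →L[ℝ] ↥(Cp X ↥(Cp Y ℝ)), Function.Surjective T) ∧
      ¬ Nonempty (↥(Cp (X × Y) ℝ) ≃L[ℝ] ↥(Cp X ↥(Cp Y ℝ))) :=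
  statement4_general X Y hXY
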